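/- Let p be a prime, H > 0, and let X = (X_n)_{n∈ℕ₀} be a dt-ss-si process with scaling function b(n) = (|n|_p)^H such that E(X₁²) < ∞. Then for all m, n ∈ ℕ₀, Cov(X_n, X_m) = ½·((|n|_p)^{2H} + (|m|_p)^{2H} − (|n−m|_p)^{2H})·Var(X₁), where |0|_p = 0 and |−k|_p = |k|_p for integers k. -/

import Mathlib

open MeasureTheory ProbabilityTheory Filter

noncomputable section

/-- The `p`-adic norm of a natural number, as a real number (`0` for `n = 0`). -/
def padicNormNat (p n : ℕ) : ℝ := ((padicNorm p (n : ℚ) : ℚ) : ℝ)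

/-- Equality in distribution of two families of random variables: the laws of the
induced maps into the product space coincide. -/
def EqDistFam {ι Ω₁ Ω₂ E : Type*} [MeasurableSpace Ω₁] [MeasurableSpace Ω₂]
    [MeasurableSpace E]
    (P₁ : Measure Ω₁) (P₂ : Measure Ω₂) (X : ι → Ω₁ → E) (Y : ι → Ω₂ → E) : Prop :=
  Measure.map (fun ω i => X i ω) P₁ = Measure.map (fun ω i => Y i ω) P₂

/-- A discrete-time process is self-similar with scaling function `b` if for every `n ≥ 1`,
`(X (n*m))ₘ ≐ (b n • X m)ₘ`. -/
def SelfSimilar {Ω : Type*} [MeasurableSpace Ω] (P : Measure Ω) (X : ℕ → Ω → ℝ)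
    (b : ℕ → ℝ) : Prop :=
  ∀ n : ℕ, 1 ≤ n → EqDistFam P P (fun m ω => X (n * m) ω) (fun m ω => b n * X m ω)

/-- A discrete-time process has stationary increments if for every `k ≥ 1`,
`(X (m+1) - X m)ₘ ≐ (X (m+k+1) - X (m+k))ₘ`. -/
def StationaryIncrements {Ω : Type*} [MeasurableSpace Ω] (P : Measure Ω)
    (X : ℕ → Ω → ℝ) : Prop :=
  ∀ k : ℕ, 1 ≤ k → EqDistFam P P (fun m ω => X (m + 1) ω - X m ω)
    (fun m ω => X (m + k + 1) ω - X (m + k) ω)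

/-- The covariance of two real random variables. -/
def cov {Ω : Type*} [MeasurableSpace Ω] (P : Measure Ω) (Y Z : Ω → ℝ) : ℝ :=
  ∫ ω, (Y ω - ∫ x, Y x ∂P) * (Z ω - ∫ x, Z x ∂P) ∂P

/-- The `p`-adic norm of the difference of two natural numbers, as a real number. -/
def padicNormSub (p m n : ℕ) : ℝ := ((padicNorm p ((m : ℚ) - (n : ℚ)) : ℚ) : ℝ)

/-!
Self-similarity at scale `p` gives `X 0 ≐ |p|_p^H • X 0` with `|p|_p^H < 1`, which for a square
integrable `X 0` forces `X 0 = 0` a.s.; comparing the means of the equidistributed increments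
`X 1 - X 0` and `X 2 - X 1` then gives `(2 - |2|_p^H) E X 1 = 0`, so `X` is centred. Second moments
scale as `E X n ^ 2 = |n|_p^{2H} E X 1 ^ 2`, stationarity of the increments turns this into
`E (X n - X m) ^ 2 = |n - m|_p^{2H} E X 1 ^ 2`, and polarization gives the covariance.
-/

section PadicNorm

variable {p : ℕ}

lemma padicNormNat_nonneg (n : ℕ) : 0 ≤ padicNormNat p n := by
  unfold padicNormNat
  exact_mod_cast padicNorm.nonneg _

lemma padicNormNat_le_one [Fact p.Prime] (n : ℕ) : padicNormNat p n ≤ 1 := by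
  unfold padicNormNat
  exact_mod_cast padicNorm.of_nat n

lemma padicNormNat_self_lt_one (hp : 1 < p) : padicNormNat p p < 1 := by
  unfold padicNormNat
  exact_mod_cast padicNorm.padicNorm_p_lt_one hp

lemma padicNormSub_eq_padicNormNat_dist (m n : ℕ) :
    padicNormSub p m n = padicNormNat p (m.dist n) := by
  unfold padicNormSub padicNormNat
  rcases le_total n m with h | h
  · rw [Nat.dist_eq_sub_of_le_right h, Nat.cast_sub h]
  · rw [Nat.dist_eq_sub_of_le h, Nat.cast_sub h, ← padicNorm.neg, neg_sub]

end PadicNorm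

lemma EqDistFam.identDistrib_comp {ι Ω₁ Ω₂ E F : Type*} [MeasurableSpace Ω₁]
    [MeasurableSpace Ω₂] [MeasurableSpace E] [MeasurableSpace F] {P₁ : Measure Ω₁}
    {P₂ : Measure Ω₂} {X : ι → Ω₁ → E} {Y : ι → Ω₂ → E} (h : EqDistFam P₁ P₂ X Y)
    (hX : ∀ i, Measurable (X i)) (hY : ∀ i, Measurable (Y i)) {G : (ι → E) → F}
    (hG : Measurable G) :
    IdentDistrib (fun ω => G (fun i => X i ω)) (fun ω => G (fun i => Y i ω)) P₁ P₂ :=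
  (IdentDistrib.mk (measurable_pi_lambda _ hX).aemeasurable
    (measurable_pi_lambda _ hY).aemeasurable h).comp hG

section RandomVariable

variable {Ω : Type*} [MeasurableSpace Ω] {P : Measure Ω}

lemma ae_eq_zero_of_identDistrib_const_mul {Y : Ω → ℝ} {c : ℝ} (hY : MemLp Y 2 P) (hc : |c| ≠ 1)
    (h : IdentDistrib Y (fun ω => c * Y ω) P P) : Y =ᵐ[P] 0 := by
  have hsq : ∫ ω, Y ω ^ 2 ∂P = c ^ 2 * ∫ ω, Y ω ^ 2 ∂P := by
    simp_rw [← integral_const_mul, ← mul_pow]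
    exact (h.comp (continuous_pow 2).measurable).integral_eq
  have hc2 : c ^ 2 ≠ 1 := by
    rwa [← sq_abs, Ne, pow_eq_one_iff_of_nonneg (abs_nonneg c) two_ne_zero]
  have hzero : ∫ ω, Y ω ^ 2 ∂P = 0 := by
    by_contra hne
    exact hc2 (mul_eq_right₀ hne |>.mp hsq.symm)
  filter_upwards [(integral_eq_zero_iff_of_nonneg (fun ω => sq_nonneg (Y ω))
    hY.integrable_sq).mp hzero] with ω hω
  exact pow_eq_zero_iff two_ne_zero |>.mp hω

lemma cov_eq_integral_mul {Y Z : Ω → ℝ}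
    (hY : ∫ ω, Y ω ∂P = 0) (hZ : ∫ ω, Z ω ∂P = 0) : cov P Y Z = ∫ ω, Y ω * Z ω ∂P := by
  simp [cov, hY, hZ]

lemma integral_mul_eq_polarization {Y Z : Ω → ℝ} (hY : MemLp Y 2 P) (hZ : MemLp Z 2 P) :
    ∫ ω, Y ω * Z ω ∂P =
      1 / 2 * (∫ ω, Y ω ^ 2 ∂P + ∫ ω, Z ω ^ 2 ∂P - ∫ ω, (Y ω - Z ω) ^ 2 ∂P) := by
  have hY2 : Integrable (fun ω => Y ω ^ 2) P := hY.integrable_sq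
  have hZ2 : Integrable (fun ω => Z ω ^ 2) P := hZ.integrable_sq
  have hYZ2 : Integrable (fun ω => Y ω ^ 2 + Z ω ^ 2) P := hY2.add hZ2
  have hD2 : Integrable (fun ω => (Y ω - Z ω) ^ 2) P := (hY.sub hZ).integrable_sq
  calc ∫ ω, Y ω * Z ω ∂P = ∫ ω, 1 / 2 * ((Y ω ^ 2 + Z ω ^ 2) - (Y ω - Z ω) ^ 2) ∂P := by
        congr 1
        funext ω
        ring
    _ = _ := by
      rw [integral_const_mul, integral_sub hYZ2 hD2, integral_add hY2 hZ2]

section SelfSimilarity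

variable {X : ℕ → Ω → ℝ} {b : ℕ → ℝ}

lemma SelfSimilar.identDistrib (hss : SelfSimilar P X b) (hX : ∀ n, Measurable (X n))
    {k : ℕ} (hk : 1 ≤ k) (m : ℕ) : IdentDistrib (X (k * m)) (fun ω => b k * X m ω) P P :=
  (hss k hk).identDistrib_comp (fun _ => hX _) (fun i => (hX i).const_mul _)
    (measurable_pi_apply m)

lemma StationaryIncrements.identDistrib_sub (hsi : StationaryIncrements P X)
    (hX : ∀ n, Measurable (X n)) (k j : ℕ) :
    IdentDistrib (fun ω => X j ω - X 0 ω) (fun ω => X (k + j) ω - X k ω) P P := by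
  rcases Nat.eq_zero_or_pos k with rfl | hk
  · simp only [zero_add]
    exact .refl ((hX j).sub (hX 0)).aemeasurable
  convert (hsi k hk).identDistrib_comp (fun _ => (hX _).sub (hX _))
    (fun _ => (hX _).sub (hX _))
    (Finset.measurable_sum (Finset.range j) fun i _ => measurable_pi_apply i) using 2 with ω ω
  · exact (Finset.sum_range_sub (fun i => X i ω) j).symm
  · simpa only [add_right_comm _ k 1, zero_add, add_comm j k]
      using (Finset.sum_range_sub (fun i => X (i + k) ω) j).symm

lemma SelfSimilar.memLp_two (hss : SelfSimilar P X b) (hsi : StationaryIncrements P X)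
    (hX : ∀ n, Measurable (X n)) (h1 : MemLp (X 1) 2 P) (n : ℕ) : MemLp (X n) 2 P := by
  have hpos : ∀ k, 1 ≤ k → MemLp (X k) 2 P := fun k hk => by
    simpa using (hss.identDistrib hX hk 1).memLp_iff.mpr (h1.const_mul (b k))
  rcases n.eq_zero_or_pos with rfl | hn
  · have hinc : MemLp (fun ω => X 1 ω - X 0 ω) 2 P :=
      (hsi.identDistrib_sub hX 1 1).memLp_iff.mpr ((hpos 2 one_le_two).sub h1)
    convert h1.sub hinc using 1
    funext ω
    simp
  · exact hpos n hn

lemma SelfSimilar.integral_eq (hss : SelfSimilar P X b) (hX : ∀ n, Measurable (X n))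
    {k : ℕ} (hk : 1 ≤ k) : ∫ ω, X k ω ∂P = b k * ∫ ω, X 1 ω ∂P := by
  simpa [integral_const_mul] using (hss.identDistrib hX hk 1).integral_eq

lemma SelfSimilar.ae_eq_zero (hss : SelfSimilar P X b) (hX : ∀ n, Measurable (X n))
    (h0 : MemLp (X 0) 2 P) {k : ℕ} (hk : 1 ≤ k) (hbk : |b k| ≠ 1) : X 0 =ᵐ[P] 0 :=
  ae_eq_zero_of_identDistrib_const_mul h0 hbk (by simpa using hss.identDistrib hX hk 0)

lemma SelfSimilar.integral_eq_zero [IsFiniteMeasure P] (hss : SelfSimilar P X b)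
    (hsi : StationaryIncrements P X) (hX : ∀ n, Measurable (X n)) (h1 : MemLp (X 1) 2 P)
    (h0 : X 0 =ᵐ[P] 0) (hb2 : b 2 ≠ 2) : ∫ ω, X 1 ω ∂P = 0 := by
  have hint : ∀ n, Integrable (X n) P := fun n =>
    (hss.memLp_two hsi hX h1 n).integrable one_le_two
  have h := (hsi.identDistrib_sub hX 1 1).integral_eq
  rw [integral_sub (hint 1) (hint 0), integral_sub (hint _) (hint 1), integral_congr_ae h0,
    show 1 + 1 = 2 from rfl, hss.integral_eq hX one_le_two] at h
  have h2 : (2 - b 2) * ∫ ω, X 1 ω ∂P = 0 := by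
    simp only [Pi.zero_apply, integral_zero] at h
    linarith
  exact (mul_eq_zero.mp h2).resolve_left (sub_ne_zero.mpr hb2.symm)

lemma SelfSimilar.integral_sq_eq (hss : SelfSimilar P X b) (hX : ∀ n, Measurable (X n))
    (h0 : X 0 =ᵐ[P] 0) (hb0 : b 0 = 0) (n : ℕ) :
    ∫ ω, X n ω ^ 2 ∂P = b n ^ 2 * ∫ ω, X 1 ω ^ 2 ∂P := by
  rcases n.eq_zero_or_pos with rfl | hn
  · have hsq : (fun ω => X 0 ω ^ 2) =ᵐ[P] 0 := by
      filter_upwards [h0] with ω hω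
      simp [hω]
    simp [hb0, integral_congr_ae hsq]
  · simpa [Function.comp_def, mul_pow, integral_const_mul]
      using ((hss.identDistrib hX hn 1).comp (continuous_pow 2).measurable).integral_eq

lemma SelfSimilar.integral_sub_sq_eq (hss : SelfSimilar P X b)
    (hsi : StationaryIncrements P X) (hX : ∀ n, Measurable (X n)) (h0 : X 0 =ᵐ[P] 0)
    (hb0 : b 0 = 0) (m n : ℕ) :
    ∫ ω, (X n ω - X m ω) ^ 2 ∂P = b (n.dist m) ^ 2 * ∫ ω, X 1 ω ^ 2 ∂P := by
  wlog hmn : m ≤ n generalizing m n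
  · simpa only [Nat.dist_comm, ← neg_sub (X m _), neg_sq] using this n m (le_of_not_ge hmn)
  have h :=
    ((hsi.identDistrib_sub hX m (n - m)).comp (continuous_pow 2).measurable).integral_eq
  simp only [Nat.add_sub_cancel' hmn, Function.comp_def] at h
  rw [Nat.dist_eq_sub_of_le_right hmn, ← hss.integral_sq_eq hX h0 hb0, ← h]
  refine integral_congr_ae ?_
  filter_upwards [h0] with ω hω
  simp [hω]

theorem SelfSimilar.cov_eq [IsFiniteMeasure P] (hss : SelfSimilar P X b)
    (hsi : StationaryIncrements P X) (hX : ∀ n, Measurable (X n)) (h1 : MemLp (X 1) 2 P)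
    (h0 : X 0 =ᵐ[P] 0) (hb0 : b 0 = 0) (hmean : ∫ ω, X 1 ω ∂P = 0) (m n : ℕ) :
    cov P (X n) (X m) =
      1 / 2 * (b n ^ 2 + b m ^ 2 - b (n.dist m) ^ 2) * cov P (X 1) (X 1) := by
  have hmean_all (k : ℕ) : ∫ ω, X k ω ∂P = 0 := by
    rcases k.eq_zero_or_pos with rfl | hk
    · simp [integral_congr_ae h0]
    · rw [hss.integral_eq hX hk, hmean, mul_zero]
  rw [cov_eq_integral_mul (hmean_all n) (hmean_all m), cov_eq_integral_mul hmean hmean,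
    integral_mul_eq_polarization (hss.memLp_two hsi hX h1 n) (hss.memLp_two hsi hX h1 m),
    hss.integral_sq_eq hX h0 hb0 n, hss.integral_sq_eq hX h0 hb0 m,
    hss.integral_sub_sq_eq hsi hX h0 hb0]
  simp only [← sq]
  ring

end SelfSimilarity

end RandomVariable

/-- Proposition 2.6 (7): the covariance function of a square-integrable type-II
dt-ss-si process. -/
theorem stmt13 {Ω : Type*} [MeasurableSpace Ω] (P : Measure Ω) [IsProbabilityMeasure P]
    (X : ℕ → Ω → ℝ) (hXmeas : ∀ n, Measurable (X n))
    (p : ℕ) (hp : p.Prime) (H : ℝ) (hH : 0 < H)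
    (hss : SelfSimilar P X (fun n => (padicNormNat p n) ^ H))
    (hsi : StationaryIncrements P X)
    (hL2 : Integrable (fun ω => (X 1 ω) ^ 2) P) :
    ∀ m n : ℕ, cov P (X n) (X m) =
      (1 / 2) * ((padicNormNat p n) ^ (2 * H) + (padicNormNat p m) ^ (2 * H)
        - (padicNormSub p n m) ^ (2 * H)) * cov P (X 1) (X 1) := by
  have : Fact p.Prime := ⟨hp⟩
  have hb_sq (k : ℕ) : (padicNormNat p k ^ H) ^ 2 = padicNormNat p k ^ (2 * H) := by
    rw [mul_comm, Real.rpow_mul (padicNormNat_nonneg k), Real.rpow_two]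
  have hb0 : padicNormNat p 0 ^ H = 0 := by
    simp [padicNormNat, Real.zero_rpow hH.ne']
  have hbp : |padicNormNat p p ^ H| ≠ 1 := by
    rw [abs_of_nonneg (Real.rpow_nonneg (padicNormNat_nonneg p) H)]
    exact (Real.rpow_lt_one (padicNormNat_nonneg p) (padicNormNat_self_lt_one hp.one_lt) hH).ne
  have hb2 : padicNormNat p 2 ^ H ≠ 2 :=
    ((Real.rpow_le_one (padicNormNat_nonneg 2) (padicNormNat_le_one 2) hH.le).trans_lt
      one_lt_two).ne
  have hX1 : MemLp (X 1) 2 P :=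
    (memLp_two_iff_integrable_sq (hXmeas 1).aestronglyMeasurable).mpr hL2
  have hX0 : X 0 =ᵐ[P] 0 :=
    hss.ae_eq_zero hXmeas (hss.memLp_two hsi hXmeas hX1 0) hp.one_lt.le hbp
  have hmean : ∫ ω, X 1 ω ∂P = 0 := hss.integral_eq_zero hsi hXmeas hX1 hX0 hb2
  intro m n
  rw [hss.cov_eq hsi hXmeas hX1 hX0 hb0 hmean, padicNormSub_eq_padicNormNat_dist]
  simp only [hb_sq]
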